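/- Suppose q = Σ_i a_i ⊗ s_i ∈ Q is invertible in A^op ⊗_k S with inverse q̄ = Σ_j ā_j ⊗ s̄_j (i.e. (A,S,R,χ) is cleft). Then b₀ := Σ_j χ(s̄_j) ā_j belongs to B := {b ∈ A | χ(s_R)·b_R = χ(s)·b for all s ∈ S}, and q' := Σ_{i,j} χ(s̄_j) ā_j a_i ⊗ s_i belongs to Q and satisfies (id_A ⊗ χ)(q') = Σ_{i,j} χ(s̄_j) χ(s_i) ā_j a_i = 1_A. (Hence the Morita map τ associated to the smash product A #_R S and X : A #_R S → A, X(a ⊗ s) = χ(s)a, is surjective.) -/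
import Mathlib


open TensorProduct

noncomputable section

variable {k A S : Type*} [CommRing k] [Ring A] [Algebra k A] [Ring S] [Algebra k S]

/-- The map `S ⊗ (A ⊗ S) → A ⊗ S`, `s ⊗ (b ⊗ t) ↦ b_R ⊗ s_R t`. -/
def factInner (R : S ⊗[k] A →ₗ[k] A ⊗[k] S) : S ⊗[k] (A ⊗[k] S) →ₗ[k] A ⊗[k] S :=
  LinearMap.lTensor A (LinearMap.mul' k S) ∘ₗ (TensorProduct.assoc k A S S).toLinearMap ∘ₗ
    LinearMap.rTensor S R ∘ₗ (TensorProduct.assoc k S A S).symm.toLinearMap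

/-- The smash product multiplication on `A ⊗ S`:
`(a ⊗ s)(b ⊗ t) = a b_R ⊗ s_R t`. -/
def factMul (R : S ⊗[k] A →ₗ[k] A ⊗[k] S) (x y : A ⊗[k] S) : A ⊗[k] S :=
  (LinearMap.rTensor S (LinearMap.mul' k A) ∘ₗ (TensorProduct.assoc k A A S).symm.toLinearMap ∘ₗ
    LinearMap.lTensor A (factInner R) ∘ₗ (TensorProduct.assoc k A S (A ⊗[k] S)).toLinearMap)
    (x ⊗ₜ[k] y)

/-- For `b : A`, the map `A ⊗ S → A ⊗ S`, `a ⊗ s ↦ a b_r ⊗ s_r`. -/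
def factInner2 (R : S ⊗[k] A →ₗ[k] A ⊗[k] S) (b : A) : A ⊗[k] S →ₗ[k] A ⊗[k] S :=
  LinearMap.rTensor S (LinearMap.mul' k A) ∘ₗ (TensorProduct.assoc k A A S).symm.toLinearMap ∘ₗ
    LinearMap.lTensor A (R ∘ₗ (TensorProduct.mk k S A).flip b)

/-- `q ∈ Q` iff `Σ (a_i)_R ⊗ t_R s_i = χ(t) q` for all `t`. -/
def factQCond (R : S ⊗[k] A →ₗ[k] A ⊗[k] S) (χ : S →ₐ[k] k) (q : A ⊗[k] S) : Prop :=
  ∀ t : S, factInner R (t ⊗ₜ[k] q) = χ t • q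

/-- `b ∈ B` iff `χ(s_R) b_R = χ(s) b` for all `s`. -/
def factBCond (R : S ⊗[k] A →ₗ[k] A ⊗[k] S) (χ : S →ₐ[k] k) (b : A) : Prop :=
  ∀ s : S, TensorProduct.rid k A
    (LinearMap.lTensor A χ.toLinearMap (R (s ⊗ₜ[k] b))) = χ s • b

/-- `(id ⊗ χ) : A ⊗ S → A`. -/
def idChi (χ : S →ₐ[k] k) : A ⊗[k] S →ₗ[k] A :=
  (TensorProduct.rid k A).toLinearMap ∘ₗ LinearMap.lTensor A χ.toLinearMap

set_option maxHeartbeats 1000000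
set_option synthInstance.maxHeartbeats 400000

namespace CleftAux

variable (R : S ⊗[k] A →ₗ[k] A ⊗[k] S) (χ : S →ₐ[k] k)

lemma idChi_tmul (a : A) (s : S) : idChi (A := A) χ (a ⊗ₜ[k] s) = χ s • a := by
  simp [idChi, Algebra.smul_def]

lemma fInner_tmul (t : S) (a : A) (s : S) :
    factInner R (t ⊗ₜ[k] (a ⊗ₜ[k] s)) =
      LinearMap.lTensor A (LinearMap.mulRight k s) (R (t ⊗ₜ[k] a)) := by
  simp only [factInner, LinearMap.comp_apply, LinearEquiv.coe_coe, assoc_symm_tmul,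
    LinearMap.rTensor_tmul]
  induction R (t ⊗ₜ[k] a) using TensorProduct.induction_on with
  | zero => simp
  | tmul c w => simp
  | add x y hx hy => simp [add_tmul, hx, hy]

lemma fInner2_tmul (b : A) (a : A) (s : S) :
    factInner2 R b (a ⊗ₜ[k] s) =
      LinearMap.rTensor S (LinearMap.mulLeft k a) (R (s ⊗ₜ[k] b)) := by
  simp only [factInner2, LinearMap.comp_apply, LinearEquiv.coe_coe, LinearMap.lTensor_tmul,
    LinearMap.comp_apply, TensorProduct.mk_apply, LinearMap.flip_apply]
  induction R (s ⊗ₜ[k] b) using TensorProduct.induction_on with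
  | zero => simp
  | tmul c w => simp
  | add x y hx hy => simp [tmul_add, hx, hy]

/-- `factMul (c ⊗ w) y = (c ⊗ 1) # factInner (w ⊗ y)`. -/
lemma fMul_tmul (c : A) (w : S) (y : A ⊗[k] S) :
    factMul R (c ⊗ₜ[k] w) y =
      LinearMap.rTensor S (LinearMap.mulLeft k c) (factInner R (w ⊗ₜ[k] y)) := by
  rw [factMul]
  simp only [LinearMap.comp_apply, LinearEquiv.coe_coe, assoc_tmul, LinearMap.lTensor_tmul]
  induction factInner R (w ⊗ₜ[k] y) using TensorProduct.induction_on with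
  | zero => simp
  | tmul d v => simp
  | add x y hx hy => simp [tmul_add, hx, hy]

/-- `ψ_s(a) = (id ⊗ χ)(R(s ⊗ a))`. -/
def psi (s : S) : A →ₗ[k] A := idChi χ ∘ₗ R ∘ₗ TensorProduct.mk k S A s

lemma psi_apply (s : S) (a : A) : psi R χ s a = idChi χ (R (s ⊗ₜ[k] a)) := rfl

/-- `bigN (w ⊗ (a ⊗ s)) = χ(s) • ψ_w(a)`. -/
def bigN : S ⊗[k] (A ⊗[k] S) →ₗ[k] A :=
  idChi χ ∘ₗ LinearMap.rTensor S (idChi χ ∘ₗ R) ∘ₗ (TensorProduct.assoc k S A S).symm.toLinearMap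

lemma bigN_tmul (w : S) (a : A) (s : S) :
    bigN R χ (w ⊗ₜ[k] (a ⊗ₜ[k] s)) = χ s • idChi χ (R (w ⊗ₜ[k] a)) := by
  simp [bigN, idChi_tmul]

/-- `mu y (c ⊗ w) = c * bigN (w ⊗ y)`. -/
def mu (y : A ⊗[k] S) : A ⊗[k] S →ₗ[k] A :=
  LinearMap.mul' k A ∘ₗ
    LinearMap.lTensor A (bigN R χ ∘ₗ (TensorProduct.mk k S (A ⊗[k] S)).flip y)

lemma mu_tmul (y : A ⊗[k] S) (c : A) (w : S) :
    mu R χ y (c ⊗ₜ[k] w) = c * bigN R χ (w ⊗ₜ[k] y) := by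
  simp [mu]

lemma idChi_rTensor_mulLeft (c : A) (z : A ⊗[k] S) :
    idChi χ (LinearMap.rTensor S (LinearMap.mulLeft k c) z) = c * idChi χ z := by
  induction z using TensorProduct.induction_on with
  | zero => simp
  | tmul a s => simp [idChi_tmul, mul_smul_comm]
  | add x y hx hy => simp [hx, hy, mul_add]

lemma idChi_lTensor_mulRight (s : S) (z : A ⊗[k] S) :
    idChi χ (LinearMap.lTensor A (LinearMap.mulRight k s) z) = χ s • idChi χ z := by
  induction z using TensorProduct.induction_on with
  | zero => simp
  | tmul a v => simp [idChi_tmul, mul_comm, mul_smul]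
  | add x y hx hy => simp [hx, hy, smul_add]

/-- The multiplication of `A^op ⊗ S`. -/
def emul : (A ⊗[k] S) ⊗[k] (A ⊗[k] S) →ₗ[k] A ⊗[k] S :=
  TensorProduct.map (LinearMap.mul' k A ∘ₗ (TensorProduct.comm k A A).toLinearMap)
    (LinearMap.mul' k S) ∘ₗ (TensorProduct.tensorTensorTensorComm k A S A S).toLinearMap

lemma emul_tmul (a b : A) (s t : S) :
    emul ((a ⊗ₜ[k] s) ⊗ₜ[k] (b ⊗ₜ[k] t)) = (b * a) ⊗ₜ[k] (s * t) := by
  simp [emul, tensorTensorTensorComm_tmul]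

lemma idChi_emul (x y : A ⊗[k] S) :
    idChi χ (emul (x ⊗ₜ[k] y)) = idChi χ y * idChi χ x := by
  induction x using TensorProduct.induction_on with
  | zero => simp [tmul_zero, zero_tmul]
  | add u v hu hv => simp [add_tmul, hu, hv, mul_add]
  | tmul a s =>
    induction y using TensorProduct.induction_on with
    | zero => simp [tmul_zero]
    | add u v hu hv => simp [tmul_add, hu, hv, add_mul]
    | tmul b t =>
      simp [emul_tmul, idChi_tmul, smul_smul, mul_comm (χ t) (χ s)]

lemma idChi_fInner (u : S) (x : A ⊗[k] S) :
    idChi χ (factInner R (u ⊗ₜ[k] x)) =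
      idChi χ (LinearMap.rTensor S (psi R χ u) x) := by
  induction x using TensorProduct.induction_on with
  | zero => simp [tmul_zero]
  | add y z hy hz => simp [tmul_add, hy, hz]
  | tmul a s =>
    rw [fInner_tmul, idChi_lTensor_mulRight]
    simp [idChi_tmul, psi_apply, mul_comm (χ u) (χ s), mul_smul]

lemma fMul_eq (z : A ⊗[k] S) (a : A) (u : S) :
    factMul R z (a ⊗ₜ[k] u) =
      LinearMap.lTensor A (LinearMap.mulRight k u) (factInner2 R a z) := by
  induction z using TensorProduct.induction_on with
  | zero =>
    rw [factMul]
    simp [zero_tmul]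
  | add x y hx hy =>
    rw [factMul] at hx hy ⊢
    simp only [LinearMap.comp_apply, LinearEquiv.coe_coe] at hx hy ⊢
    simp [add_tmul, hx, hy]
  | tmul c w =>
    rw [fMul_tmul, fInner_tmul, fInner2_tmul]
    generalize R (w ⊗ₜ[k] a) = z
    induction z using TensorProduct.induction_on with
    | zero => simp
    | tmul d v => simp
    | add x y hx hy => simp [hx, hy]

lemma fInner_mulLeft (h4 : ∀ (s : S) (a b : A),
      R (s ⊗ₜ[k] (a * b)) = factInner2 R b (R (s ⊗ₜ[k] a)))
    (t : S) (b : A) (x : A ⊗[k] S) :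
    factInner R (t ⊗ₜ[k] (LinearMap.rTensor S (LinearMap.mulLeft k b) x)) =
      factMul R (R (t ⊗ₜ[k] b)) x := by
  induction x using TensorProduct.induction_on with
  | zero => simp [tmul_zero, factMul, tmul_zero]
  | add x y hx hy =>
    rw [factMul] at hx hy ⊢
    simp only [LinearMap.comp_apply, LinearEquiv.coe_coe] at hx hy ⊢
    simp [tmul_add, hx, hy]
  | tmul a u =>
    rw [LinearMap.rTensor_tmul, LinearMap.mulLeft_apply, fInner_tmul, h4, fMul_eq]

lemma idChi_fInner2 (b : A) (z : A ⊗[k] S) :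
    idChi χ (factInner2 R b z) = mu R χ (b ⊗ₜ[k] (1 : S)) z := by
  induction z using TensorProduct.induction_on with
  | zero => simp
  | add x y hx hy => simp [hx, hy]
  | tmul c w =>
    rw [fInner2_tmul, idChi_rTensor_mulLeft, mu_tmul, bigN_tmul]
    simp

lemma mu_tmul_smul (a : A) (u : S) (z : A ⊗[k] S) :
    mu R χ (a ⊗ₜ[k] u) z = χ u • mu R χ (a ⊗ₜ[k] (1 : S)) z := by
  induction z using TensorProduct.induction_on with
  | zero => simp
  | add x y hx hy => simp [hx, hy, smul_add]
  | tmul c w =>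
    rw [mu_tmul, mu_tmul, bigN_tmul, bigN_tmul]
    simp [mul_smul_comm, smul_smul]

lemma bigN_eq (w : S) (x : A ⊗[k] S) :
    bigN R χ (w ⊗ₜ[k] x) = idChi χ (LinearMap.rTensor S (psi R χ w) x) := by
  induction x using TensorProduct.induction_on with
  | zero => simp [tmul_zero]
  | add x y hx hy => simp [tmul_add, hx, hy]
  | tmul a s => rw [bigN_tmul]; simp [idChi_tmul, psi_apply]

lemma rTensor_mulLeft_smul (r : k) (b : A) (z : A ⊗[k] S) :
    LinearMap.rTensor S (LinearMap.mulLeft k (r • b)) z =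
      r • LinearMap.rTensor S (LinearMap.mulLeft k b) z := by
  induction z using TensorProduct.induction_on with
  | zero => simp
  | add x y hx hy => simp [hx, hy, smul_add]
  | tmul a s => simp [smul_mul_assoc, smul_tmul']

lemma mu_add (y₁ y₂ : A ⊗[k] S) (z : A ⊗[k] S) :
    mu R χ (y₁ + y₂) z = mu R χ y₁ z + mu R χ y₂ z := by
  induction z using TensorProduct.induction_on with
  | zero => simp
  | add x y hx hy => simp only [map_add, hx, hy]; abel
  | tmul c w => simp [mu_tmul, tmul_add, mul_add]

lemma mu_zero (z : A ⊗[k] S) : mu R χ (0 : A ⊗[k] S) z = 0 := by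
  induction z using TensorProduct.induction_on with
  | zero => simp
  | add x y hx hy => simp [hx, hy]
  | tmul c w => simp [mu_tmul, tmul_zero]

lemma key4a (h4 : ∀ (s : S) (a b : A),
      R (s ⊗ₜ[k] (a * b)) = factInner2 R b (R (s ⊗ₜ[k] a)))
    (s : S) (x y : A ⊗[k] S) :
    idChi χ (LinearMap.rTensor S (psi R χ s) (emul (y ⊗ₜ[k] x))) =
      mu R χ y (R (s ⊗ₜ[k] idChi χ x)) := by
  induction x using TensorProduct.induction_on with
  | zero => simp [tmul_zero]
  | add x₁ x₂ hx₁ hx₂ => simp [tmul_add, hx₁, hx₂]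
  | tmul abar sbar =>
    induction y using TensorProduct.induction_on with
    | zero => simp [zero_tmul, mu_zero]
    | add y₁ y₂ hy₁ hy₂ => simp [add_tmul, hy₁, hy₂, mu_add]
    | tmul a u =>
      rw [emul_tmul, LinearMap.rTensor_tmul]
      rw [idChi_tmul, psi_apply, h4, idChi_fInner2, idChi_tmul, tmul_smul,
        map_smul, map_smul, mu_tmul_smul]
      simp only [smul_smul, mul_comm (χ u) (χ sbar)]
      rw [mu_tmul_smul R χ a u, smul_smul]
      simp [mul_comm]

section WithQ

variable {R χ} {q : A ⊗[k] S} (hq : ∀ t : S, factInner R (t ⊗ₜ[k] q) = χ t • q)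
include hq

lemma step2 (w : S) : bigN R χ (w ⊗ₜ[k] q) = χ w • idChi χ q := by
  rw [bigN_eq, ← idChi_fInner, hq w, map_smul]

lemma key4b (z : A ⊗[k] S) : mu R χ q z = idChi χ z * idChi χ q := by
  induction z using TensorProduct.induction_on with
  | zero => simp
  | add x y hx hy => simp [hx, hy, add_mul]
  | tmul c w =>
    rw [mu_tmul, step2 hq, idChi_tmul]
    simp [mul_smul_comm, smul_mul_assoc]

omit hq in
lemma rTensor_mulLeft_add (b c : A) (z : A ⊗[k] S) :
    LinearMap.rTensor S (LinearMap.mulLeft k (b + c)) z =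
      LinearMap.rTensor S (LinearMap.mulLeft k b) z +
        LinearMap.rTensor S (LinearMap.mulLeft k c) z := by
  induction z using TensorProduct.induction_on with
  | zero => simp
  | add x y hx hy => simp only [map_add, hx, hy]; abel
  | tmul a s => simp [add_mul, add_tmul]

lemma lemB (z : A ⊗[k] S) :
    factMul R z q = LinearMap.rTensor S (LinearMap.mulLeft k (idChi χ z)) q := by
  induction z using TensorProduct.induction_on with
  | zero =>
    rw [factMul]
    simp only [map_zero, zero_tmul, LinearMap.comp_apply, map_zero]
    have : LinearMap.mulLeft k (0 : A) = 0 := by ext x; simp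
    rw [this, LinearMap.rTensor_zero, LinearMap.zero_apply]
  | add x y hx hy =>
    rw [factMul] at hx hy ⊢
    simp only [LinearMap.comp_apply, LinearEquiv.coe_coe] at hx hy ⊢
    rw [map_add, add_tmul, map_add, map_add, map_add, map_add, hx, hy,
      rTensor_mulLeft_add]
  | tmul c w =>
    rw [fMul_tmul, hq w, map_smul, idChi_tmul, rTensor_mulLeft_smul]

end WithQ

end CleftAux

open CleftAux in
theorem cleft_factorization_tau_surjective' (R : S ⊗[k] A →ₗ[k] A ⊗[k] S)
    (h1 : ∀ s : S, R (s ⊗ₜ[k] (1 : A)) = (1 : A) ⊗ₜ[k] s)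
    (h2 : ∀ a : A, R ((1 : S) ⊗ₜ[k] a) = a ⊗ₜ[k] (1 : S))
    (h3 : ∀ (s t : S) (a : A),
      R ((s * t) ⊗ₜ[k] a) = factInner R (s ⊗ₜ[k] R (t ⊗ₜ[k] a)))
    (h4 : ∀ (s : S) (a b : A),
      R (s ⊗ₜ[k] (a * b)) = factInner2 R b (R (s ⊗ₜ[k] a)))
    (χ : S →ₐ[k] k) (q qbar : A ⊗[k] S)
    (hq : ∀ t : S, factInner R (t ⊗ₜ[k] q) = χ t • q)
    (hinv1 : (TensorProduct.map (LinearMap.mul' k A ∘ₗ (TensorProduct.comm k A A).toLinearMap)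
        (LinearMap.mul' k S) ∘ₗ (TensorProduct.tensorTensorTensorComm k A S A S).toLinearMap)
        (qbar ⊗ₜ[k] q) = (1 : A) ⊗ₜ[k] (1 : S))
    (hinv2 : (TensorProduct.map (LinearMap.mul' k A ∘ₗ (TensorProduct.comm k A A).toLinearMap)
        (LinearMap.mul' k S) ∘ₗ (TensorProduct.tensorTensorTensorComm k A S A S).toLinearMap)
        (q ⊗ₜ[k] qbar) = (1 : A) ⊗ₜ[k] (1 : S)) :
    (∀ s : S, TensorProduct.rid k A
      (LinearMap.lTensor A χ.toLinearMap (R (s ⊗ₜ[k] idChi χ qbar))) = χ s • idChi χ qbar) ∧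
    (∀ t : S, factInner R (t ⊗ₜ[k] (LinearMap.rTensor S (LinearMap.mulLeft k (idChi χ qbar)) q))
        = χ t • (LinearMap.rTensor S (LinearMap.mulLeft k (idChi χ qbar)) q)) ∧
    idChi χ (LinearMap.rTensor S (LinearMap.mulLeft k (idChi χ qbar)) q) = 1 := by
  have hinv1' : emul (k := k) (A := A) (S := S) (qbar ⊗ₜ[k] q) = (1 : A) ⊗ₜ[k] (1 : S) := hinv1
  have hinv2' : emul (k := k) (A := A) (S := S) (q ⊗ₜ[k] qbar) = (1 : A) ⊗ₜ[k] (1 : S) := hinv2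
  have h_eb : idChi χ q * idChi χ qbar = 1 := by
    have h := congrArg (idChi χ) hinv1'
    rwa [idChi_emul, idChi_tmul, map_one, one_smul] at h
  have h_be : idChi χ qbar * idChi χ q = 1 := by
    have h := congrArg (idChi χ) hinv2'
    rwa [idChi_emul, idChi_tmul, map_one, one_smul] at h
  have hB : ∀ s : S, idChi χ (R (s ⊗ₜ[k] idChi χ qbar)) = χ s • idChi χ qbar := by
    intro s
    have key := key4a R χ h4 s qbar q
    rw [hinv2'] at key
    have hL : idChi χ (LinearMap.rTensor S (psi R χ s) ((1 : A) ⊗ₜ[k] (1 : S)))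
        = χ s • (1 : A) := by
      rw [LinearMap.rTensor_tmul, psi_apply, h1]
      simp [idChi_tmul]
    rw [hL, key4b hq] at key
    calc idChi χ (R (s ⊗ₜ[k] idChi χ qbar))
        = idChi χ (R (s ⊗ₜ[k] idChi χ qbar)) * (idChi χ q * idChi χ qbar) := by
          rw [h_eb, mul_one]
      _ = (idChi χ (R (s ⊗ₜ[k] idChi χ qbar)) * idChi χ q) * idChi χ qbar := by
          rw [mul_assoc]
      _ = (χ s • (1 : A)) * idChi χ qbar := by rw [← key]
      _ = χ s • idChi χ qbar := by rw [smul_mul_assoc, one_mul]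
  refine ⟨fun s => by simpa [idChi] using hB s, fun t => ?_, ?_⟩
  · rw [fInner_mulLeft R h4, lemB hq, hB t, rTensor_mulLeft_smul]
  · rw [idChi_rTensor_mulLeft, h_be]

/-- If the factorization structure is cleft (i.e. `Q` contains an element `q`
invertible in `A^op ⊗ S`, with inverse `q̄`), then `b₀ = Σ χ(s̄_j) ā_j ∈ B`, and
`q' = Σ χ(s̄_j) ā_j a_i ⊗ s_i ∈ Q` satisfies `(id ⊗ χ)(q') = 1`. -/
theorem cleft_factorization_tau_surjective (R : S ⊗[k] A →ₗ[k] A ⊗[k] S)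
    (h1 : ∀ s : S, R (s ⊗ₜ[k] (1 : A)) = (1 : A) ⊗ₜ[k] s)
    (h2 : ∀ a : A, R ((1 : S) ⊗ₜ[k] a) = a ⊗ₜ[k] (1 : S))
    (h3 : ∀ (s t : S) (a : A),
      R ((s * t) ⊗ₜ[k] a) = factInner R (s ⊗ₜ[k] R (t ⊗ₜ[k] a)))
    (h4 : ∀ (s : S) (a b : A),
      R (s ⊗ₜ[k] (a * b)) = factInner2 R b (R (s ⊗ₜ[k] a)))
    (χ : S →ₐ[k] k) (q qbar : A ⊗[k] S)
    -- q ∈ Q, invertible in A^op ⊗ S with inverse q̄ :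
    (hq : factQCond R χ q)
    (hinv1 : (TensorProduct.map (LinearMap.mul' k A ∘ₗ (TensorProduct.comm k A A).toLinearMap)
        (LinearMap.mul' k S) ∘ₗ (TensorProduct.tensorTensorTensorComm k A S A S).toLinearMap)
        (qbar ⊗ₜ[k] q) = (1 : A) ⊗ₜ[k] (1 : S))
    (hinv2 : (TensorProduct.map (LinearMap.mul' k A ∘ₗ (TensorProduct.comm k A A).toLinearMap)
        (LinearMap.mul' k S) ∘ₗ (TensorProduct.tensorTensorTensorComm k A S A S).toLinearMap)
        (q ⊗ₜ[k] qbar) = (1 : A) ⊗ₜ[k] (1 : S)) :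
    -- b₀ = Σ χ(s̄_j) ā_j belongs to B
    factBCond R χ (idChi χ qbar) ∧
    -- q' = Σ χ(s̄_j) ā_j a_i ⊗ s_i belongs to Q
    factQCond R χ (LinearMap.rTensor S (LinearMap.mulLeft k (idChi χ qbar)) q) ∧
    -- (id ⊗ χ)(q') = 1
    idChi χ (LinearMap.rTensor S (LinearMap.mulLeft k (idChi χ qbar)) q) = 1 := by
  obtain ⟨hB, hQ, hI⟩ :=
    cleft_factorization_tau_surjective' R h1 h2 h3 h4 χ q qbar hq hinv1 hinv2
  exact ⟨hB, hQ, hI⟩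

end
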